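/- arXiv:2210.15209 — 4 statements merged into one kernel-verified Lean document; each statement's English description precedes it below -/
import Mathlib

section
/- For any two timing functions γ and σ of length n, there exists a chronological co-operative sequence of mixed moves aligning γ to σ whose cost equals d_N(γ, σ); likewise, there exists a reverse chronological co-operative sequence aligning γ to σ whose cost equals d_N(γ, σ). -/
open Finset

namespace TimedAlign

variable {n : ℕ}

/-- The stamp move `stamp(γ, x, i)`: shift the timestamp at position `i` by `x`. -/
def stamp (γ : Fin n → ℝ) (x : ℝ) (i : Fin n) : Fin n → ℝ :=
  fun j => if j = i then γ j + x else γ j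

/-- The delay move `delay(γ, x, i)`: shift all timestamps at positions `≥ i` by `x`. -/
def delay (γ : Fin n → ℝ) (x : ℝ) (i : Fin n) : Fin n → ℝ :=
  fun j => if i ≤ j then γ j + x else γ j

/-- The mixed move `(s, d, i)`: a delay move followed by a stamp move at the same position. -/
def mixed (s d : ℝ) (i : Fin n) (γ : Fin n → ℝ) : Fin n → ℝ :=
  stamp (delay γ d i) s i

/-- The timestamp preceding position `i` (with the convention `τ(0) = 0`). -/
def prev (τ : Fin n → ℝ) (i : Fin n) : ℝ :=
  if (i : ℕ) = 0 then 0
  else τ ⟨(i : ℕ) - 1, lt_of_le_of_lt (Nat.sub_le _ _) i.isLt⟩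

/-- The flow function of a timing function: `f_τ(1) = τ(1)`, `f_τ(i) = τ(i) - τ(i-1)`. -/
def flow (τ : Fin n → ℝ) (i : Fin n) : ℝ := τ i - prev τ i

/-- Elementary moves: stamp moves and delay moves. -/
inductive Move (n : ℕ) where
  | stampM (x : ℝ) (i : Fin n)
  | delayM (x : ℝ) (i : Fin n)

def Move.apply : Move n → (Fin n → ℝ) → (Fin n → ℝ)
  | .stampM x i, γ => stamp γ x i
  | .delayM x i, γ => delay γ x i

def Move.cost : Move n → ℝ
  | .stampM x _ => |x|
  | .delayM x _ => |x|

/-- Apply a sequence of moves `m₁ m₂ ⋯ m_k`, with `m₁` first. -/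
def applySeq (ms : List (Move n)) (γ : Fin n → ℝ) : Fin n → ℝ :=
  ms.foldl (fun τ m => m.apply τ) γ

/-- The cost of a sequence of moves is the sum of the costs of its moves. -/
def seqCost (ms : List (Move n)) : ℝ := (ms.map Move.cost).sum

/-- The mixed-moves distance `d_N`: the minimum cost over all finite sequences of
stamp and delay moves aligning `τ₁` to `τ₂`. -/
noncomputable def dN (τ₁ τ₂ : Fin n → ℝ) : ℝ :=
  sInf {c : ℝ | ∃ ms : List (Move n), applySeq ms τ₁ = τ₂ ∧ seqCost ms = c}

/-- Apply the chronological sequence of mixed moves `(s₁,d₁,1)(s₂,d₂,2)⋯(s_n,d_n,n)`,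
in increasing order of positions. -/
def chronApply (s d : Fin n → ℝ) (γ : Fin n → ℝ) : Fin n → ℝ :=
  (List.finRange n).foldl (fun τ i => mixed (s i) (d i) i τ) γ

/-- Apply the reverse chronological sequence `(s_n,d_n,n)⋯(s₁,d₁,1)`,
in decreasing order of positions. -/
def revChronApply (s d : Fin n → ℝ) (γ : Fin n → ℝ) : Fin n → ℝ :=
  (List.finRange n).reverse.foldl (fun τ i => mixed (s i) (d i) i τ) γ

/-- The cost of a (reverse) chronological sequence of mixed moves. -/
def chronCost (s d : Fin n → ℝ) : ℝ := ∑ i, (|s i| + |d i|)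

/-- A sequence of mixed moves is co-operative if each move has `s·d ≥ 0`. -/
def Cooperative (s d : Fin n → ℝ) : Prop := ∀ i, 0 ≤ s i * d i

/-- The move at the last position is a pure delay (`s_n = 0`). -/
def LastStampZero (s : Fin n → ℝ) : Prop := ∀ i : Fin n, (i : ℕ) + 1 = n → s i = 0

/-- Cross co-operation: `s_i · d_{i+1} ≤ 0` for all `i < n`. -/
def CrossCooperative (s d : Fin n → ℝ) : Prop :=
  ∀ i : Fin n, ∀ h : (i : ℕ) + 1 < n, s i * d ⟨(i : ℕ) + 1, h⟩ ≤ 0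

/-- The stable choice of stamp given error `e` at the current position and
residual `r` at the next position. -/
noncomputable def stableStamp (e r : ℝ) : ℝ :=
  if 0 ≤ e * r then 0 else if |e| < |r| then e else -r

/-- Stability of the stamp components of a reverse chronological co-operative run
aligning `γ` to `σ`: writing `e_i = f_σ(i) - f_γ(i)` and `r_{i+1} = e_{i+1} - s_{i+1}`,
`s_i = 0` if `e_i·r_{i+1} ≥ 0`, `s_i = e_i` if moreover `|e_i| < |r_{i+1}|`,
and `s_i = -r_{i+1}` otherwise. -/
def Stable (γ σ s : Fin n → ℝ) : Prop :=
  ∀ i : Fin n, ∀ h : (i : ℕ) + 1 < n,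
    s i = stableStamp (flow σ i - flow γ i)
      ((flow σ ⟨(i : ℕ) + 1, h⟩ - flow γ ⟨(i : ℕ) + 1, h⟩) - s ⟨(i : ℕ) + 1, h⟩)

/-- `s_{i-1}`, with the convention `s₀ = 0`. -/
def sprev (s : Fin n → ℝ) (i : Fin n) : ℝ :=
  if (i : ℕ) = 0 then 0
  else s ⟨(i : ℕ) - 1, lt_of_le_of_lt (Nat.sub_le _ _) i.isLt⟩

/-- Stamp-component effect of a move. -/
def sE : Move n → Fin n → ℝ
  | .stampM x i => fun j => if j = i then x else 0
  | .delayM _ _ => fun _ => 0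

/-- Delay-component (cumulative) effect of a move. -/
def dE : Move n → Fin n → ℝ
  | .stampM _ _ => fun _ => 0
  | .delayM x i => fun j => if i ≤ j then x else 0

/-- Delay amount of a move at each position. -/
def dA : Move n → Fin n → ℝ
  | .stampM _ _ => fun _ => 0
  | .delayM x i => fun j => if j = i then x else 0

lemma apply_eq (m : Move n) (τ : Fin n → ℝ) (j : Fin n) :
    m.apply τ j = τ j + sE m j + dE m j := by
  cases m with
  | stampM x i => simp only [Move.apply, stamp, sE, dE]; split <;> ring
  | delayM x i => simp only [Move.apply, delay, sE, dE]; split <;> ring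

lemma applySeq_eq (ms : List (Move n)) (γ : Fin n → ℝ) (j : Fin n) :
    applySeq ms γ j = γ j + (ms.map (fun m => sE m j + dE m j)).sum := by
  induction ms generalizing γ with
  | nil => simp [applySeq]
  | cons m ms ih =>
      have h1 : applySeq (m :: ms) γ = applySeq ms (m.apply γ) := rfl
      rw [h1, ih, apply_eq]
      simp; ring

lemma sprev_zero (j : Fin n) : sprev (fun _ => (0:ℝ)) j = 0 := by
  simp [sprev]

lemma dA_eq (m : Move n) (j : Fin n) :
    dA m j = dE m j - sprev (dE m) j := by
  cases m with
  | stampM x i => simp [dA, dE, sprev]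
  | delayM x i =>
      simp only [dA, dE, sprev]
      rcases j with ⟨jv, hjv⟩
      rcases jv with _ | k
      · simp only [if_pos rfl]
        have : (i ≤ (⟨0, hjv⟩ : Fin n)) ↔ ((⟨0, hjv⟩ : Fin n) = i) := by
          constructor
          · intro h; exact le_antisymm (Fin.mk_le_mk.mpr (Nat.zero_le _)) h
          · intro h; exact h.ge
        split_ifs with h1 h2 h2 <;> simp_all <;> linarith [this]
      · have hk : ¬ (k + 1 = 0) := by omega
        rw [if_neg hk]
        have hkn : k < n := by omega
        by_cases h1 : i ≤ (⟨k + 1 - 1, lt_of_le_of_lt (Nat.sub_le _ _) hjv⟩ : Fin n)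
        · have h2 : i ≤ (⟨k+1, hjv⟩ : Fin n) := by
            simp only [Fin.le_def] at h1 ⊢; omega
          have h3 : ¬ ((⟨k+1, hjv⟩ : Fin n) = i) := by
            intro h; rw [← h] at h1; simp [Fin.le_def] at h1
          rw [if_neg h3, if_pos h2, if_pos h1]; ring
        · by_cases h2 : i ≤ (⟨k+1, hjv⟩ : Fin n)
          · have h3 : (⟨k+1, hjv⟩ : Fin n) = i := by
              simp only [Fin.le_def] at h1 h2
              apply Fin.ext; simp; omega
            rw [if_pos h3, if_pos h2, if_neg h1]; ring
          · have h3 : ¬ ((⟨k+1, hjv⟩ : Fin n) = i) := by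
              intro h; exact h2 h.ge
            rw [if_neg h3, if_neg h2, if_neg h1]; ring

lemma cost_eq (m : Move n) : m.cost = ∑ j, (|sE m j| + |dA m j|) := by
  cases m with
  | stampM x i =>
      simp only [Move.cost, sE, dA]
      rw [Finset.sum_congr rfl (fun j _ => show |if j = i then x else 0| + |(0:ℝ)| = if j = i then |x| else 0 by split <;> simp)]
      simp
  | delayM x i =>
      simp only [Move.cost, sE, dA]
      rw [Finset.sum_congr rfl (fun j _ => show |(0:ℝ)| + |if j = i then x else 0| = if j = i then |x| else 0 by split <;> simp)]
      simp

lemma list_sum_comm {α : Type*} (l : List α) (f : α → Fin n → ℝ) :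
    (l.map (fun m => ∑ j, f m j)).sum = ∑ j, (l.map (fun m => f m j)).sum := by
  induction l with
  | nil => simp
  | cons a l ih => simp [ih, Finset.sum_add_distrib]

lemma list_abs_sum {α : Type*} (l : List α) (f : α → ℝ) :
    |(l.map f).sum| ≤ (l.map (fun m => |f m|)).sum := by
  induction l with
  | nil => simp
  | cons a l ih =>
      simp only [List.map_cons, List.sum_cons]
      calc |f a + (l.map f).sum| ≤ |f a| + |(l.map f).sum| := abs_add_le _ _
        _ ≤ |f a| + (l.map (fun m => |f m|)).sum := by linarith

/-- Flow difference in δ-coordinates. -/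
def efun (γ σ : Fin n → ℝ) (i : Fin n) : ℝ :=
  (σ i - γ i) - sprev (fun j => σ j - γ j) i

/-- Delay amounts determined by stamp amounts `s` for alignment. -/
def Dfun (e : Fin n → ℝ) (s : Fin n → ℝ) (i : Fin n) : ℝ :=
  e i - s i + sprev s i

/-- Objective function. -/
def gfun (e : Fin n → ℝ) (s : Fin n → ℝ) : ℝ :=
  ∑ i, (|s i| + |Dfun e s i|)

lemma foldl_mixed (s d : Fin n → ℝ) (l : List (Fin n)) (γ : Fin n → ℝ) (j : Fin n) :
    (l.foldl (fun τ i => mixed (s i) (d i) i τ) γ) j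
      = γ j + (l.map (fun i => (if j = i then s i else 0) + (if i ≤ j then d i else 0))).sum := by
  induction l generalizing γ with
  | nil => simp
  | cons a l ih =>
      simp only [List.foldl_cons, List.map_cons, List.sum_cons]
      rw [ih]
      have : mixed (s a) (d a) a γ j
          = γ j + ((if j = a then s a else 0) + (if a ≤ j then d a else 0)) := by
        simp only [mixed, stamp, delay]
        split_ifs <;> ring
      rw [this]; ring

lemma sum_if_le (γ σ : Fin n → ℝ) (s : Fin n → ℝ) (j : Fin n) :
    (∑ i, if i ≤ j then Dfun (efun γ σ) s i else 0) = (σ j - γ j) - s j := by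
  rcases j with ⟨jv, hjv⟩
  induction jv with
  | zero =>
      have h0 : ∀ i : Fin n, (if i ≤ (⟨0, hjv⟩ : Fin n) then Dfun (efun γ σ) s i else 0)
          = if i = ⟨0, hjv⟩ then Dfun (efun γ σ) s ⟨0, hjv⟩ else 0 := by
        intro i
        by_cases h : i = (⟨0, hjv⟩ : Fin n)
        · subst h; rw [if_pos le_rfl, if_pos rfl]
        · rw [if_neg h, if_neg ?_]
          intro hle
          exact h (le_antisymm hle (Fin.mk_le_mk.mpr (Nat.zero_le _)))
      rw [Finset.sum_congr rfl (fun i _ => h0 i), Finset.sum_ite_eq' Finset.univ]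
      simp [Dfun, efun, sprev]
  | succ k ih =>
      have hkn : k < n := by omega
      have ihk := ih hkn
      have hsplit : ∀ i : Fin n, (if i ≤ (⟨k+1, hjv⟩ : Fin n) then Dfun (efun γ σ) s i else 0)
          = (if i ≤ (⟨k, hkn⟩ : Fin n) then Dfun (efun γ σ) s i else 0)
            + (if i = ⟨k+1, hjv⟩ then Dfun (efun γ σ) s ⟨k+1, hjv⟩ else 0) := by
        intro i
        by_cases h1 : i ≤ (⟨k, hkn⟩ : Fin n)
        · have h2 : i ≤ (⟨k+1, hjv⟩ : Fin n) := by
            simp only [Fin.le_def] at h1 ⊢; omega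
          have h3 : ¬ (i = (⟨k+1, hjv⟩ : Fin n)) := by
            intro h; subst h; simp [Fin.le_def] at h1
          rw [if_pos h1, if_pos h2, if_neg h3]; ring
        · by_cases h2 : i ≤ (⟨k+1, hjv⟩ : Fin n)
          · have h3 : i = (⟨k+1, hjv⟩ : Fin n) := by
              simp only [Fin.le_def] at h1 h2; apply Fin.ext; simp; omega
            rw [if_pos h2, if_neg h1, if_pos h3, h3]; ring
          · have h3 : ¬ (i = (⟨k+1, hjv⟩ : Fin n)) := by
              intro h; exact h2 h.le
            rw [if_neg h1, if_neg h2, if_neg h3]; ring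
      rw [Finset.sum_congr rfl (fun i _ => hsplit i), Finset.sum_add_distrib,
        Finset.sum_ite_eq' Finset.univ, ihk]
      have hsp : sprev s ⟨k+1, hjv⟩ = s ⟨k, hkn⟩ := by
        simp only [sprev]
        rw [if_neg (by omega)]
        exact congrArg s (Fin.ext (by simp))
      have hsd : sprev (fun j => σ j - γ j) ⟨k+1, hjv⟩ = σ ⟨k, hkn⟩ - γ ⟨k, hkn⟩ := by
        simp only [sprev]
        rw [if_neg (by omega)]
        have hfe : (⟨k + 1 - 1, lt_of_le_of_lt (Nat.sub_le _ _) hjv⟩ : Fin n) = ⟨k, hkn⟩ :=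
          Fin.ext (by simp)
        rw [hfe]
      simp only [Dfun, efun, hsp, hsd, Finset.mem_univ, if_pos]
      ring

lemma chron_foldl_aligns (γ σ : Fin n → ℝ) (s : Fin n → ℝ) (l : List (Fin n))
    (hl : l.Perm (List.finRange n)) :
    (l.foldl (fun τ i => mixed (s i) (Dfun (efun γ σ) s i) i τ) γ) = σ := by
  funext j
  rw [foldl_mixed]
  have hperm : (l.map (fun i => (if j = i then s i else 0)
      + (if i ≤ j then Dfun (efun γ σ) s i else 0))).sum
      = ((List.finRange n).map (fun i => (if j = i then s i else 0)
      + (if i ≤ j then Dfun (efun γ σ) s i else 0))).sum :=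
    List.Perm.sum_eq (hl.map _)
  rw [hperm, ← Fin.sum_univ_def, Finset.sum_add_distrib, Finset.sum_ite_eq Finset.univ,
    sum_if_le]
  simp

/-- The move list realizing a chronological sequence of mixed moves. -/
def msOf (s d : Fin n → ℝ) : List (Move n) :=
  (List.finRange n).flatMap (fun i => [Move.delayM (d i) i, Move.stampM (s i) i])

lemma applySeq_flatMap (s d : Fin n → ℝ) (l : List (Fin n)) (γ : Fin n → ℝ) :
    applySeq (l.flatMap (fun i => [Move.delayM (d i) i, Move.stampM (s i) i])) γ
      = l.foldl (fun τ i => mixed (s i) (d i) i τ) γ := by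
  induction l generalizing γ with
  | nil => simp [applySeq]
  | cons a l ih =>
      simp only [List.flatMap_cons, List.foldl_cons]
      have h1 : applySeq ([Move.delayM (d a) a, Move.stampM (s a) a]
          ++ l.flatMap (fun i => [Move.delayM (d i) i, Move.stampM (s i) i])) γ
          = applySeq (l.flatMap (fun i => [Move.delayM (d i) i, Move.stampM (s i) i]))
              (applySeq [Move.delayM (d a) a, Move.stampM (s a) a] γ) := by
        simp [applySeq, List.foldl_append]
      rw [h1, ih]
      rfl

lemma seqCost_msOf (s d : Fin n → ℝ) : seqCost (msOf s d) = chronCost s d := by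
  simp only [msOf, seqCost, chronCost]
  rw [Fin.sum_univ_def (fun i => |s i| + |d i|)]
  induction (List.finRange n) with
  | nil => simp
  | cons a l ih =>
      simp only [List.flatMap_cons, List.map_append, List.sum_append, List.map_cons,
        List.map_nil, List.sum_cons, List.sum_nil, Move.cost, ih]
      ring

lemma applySeq_msOf (s d : Fin n → ℝ) (γ : Fin n → ℝ) :
    applySeq (msOf s d) γ = chronApply s d γ :=
  applySeq_flatMap s d _ γ

lemma list_sum_add {α : Type*} (l : List α) (f g : α → ℝ) :
    (l.map (fun m => f m + g m)).sum = (l.map f).sum + (l.map g).sum := by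
  induction l with
  | nil => simp
  | cons a l ih => simp [ih]; ring

lemma list_sum_sub {α : Type*} (l : List α) (f g : α → ℝ) :
    (l.map (fun m => f m - g m)).sum = (l.map f).sum - (l.map g).sum := by
  induction l with
  | nil => simp
  | cons a l ih => simp [ih]; ring

/-- Lower bound: any aligning sequence costs at least `gfun e B` for some `B`. -/
lemma cost_lower (γ σ : Fin n → ℝ) (ms : List (Move n)) (h : applySeq ms γ = σ) :
    ∃ B : Fin n → ℝ, gfun (efun γ σ) B ≤ seqCost ms := by
  refine ⟨fun j => (ms.map (fun m => sE m j)).sum, ?_⟩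
  have halign : ∀ j : Fin n,
      (ms.map (fun m => sE m j)).sum + (ms.map (fun m => dE m j)).sum = σ j - γ j := by
    intro j
    have h0 := applySeq_eq ms γ j
    rw [h, list_sum_add] at h0
    linarith
  have hC : ∀ j : Fin n, (ms.map (fun m => dE m j)).sum
      = (σ j - γ j) - (ms.map (fun m => sE m j)).sum :=
    fun j => by have := halign j; linarith
  have hA : ∀ j : Fin n, (ms.map (fun m => dA m j)).sum
      = Dfun (efun γ σ) (fun j' => (ms.map (fun m => sE m j')).sum) j := by
    intro j
    have h1 : (ms.map (fun m => dA m j)).sum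
        = (ms.map (fun m => dE m j)).sum - (ms.map (fun m => sprev (dE m) j)).sum := by
      rw [← list_sum_sub]
      congr 1
      exact List.map_congr_left (fun m _ => dA_eq m j)
    have h2 : (ms.map (fun m => sprev (dE m) j)).sum
        = sprev (fun j' => (ms.map (fun m => dE m j')).sum) j := by
      by_cases hj : (j : ℕ) = 0
      · simp [sprev, hj]
      · simp [sprev, hj]
    have h3 : sprev (fun j' => (ms.map (fun m => dE m j')).sum) j
        = sprev (fun j' => σ j' - γ j') j
          - sprev (fun j' => (ms.map (fun m => sE m j')).sum) j := by
      by_cases hj : (j : ℕ) = 0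
      · simp [sprev, hj]
      · simp only [sprev, if_neg hj]
        rw [hC]
    rw [h1, h2, h3]
    simp only [Dfun, efun]
    rw [hC j]
    ring
  have hcost : seqCost ms = ∑ j, ((ms.map (fun m => |sE m j|)).sum
      + (ms.map (fun m => |dA m j|)).sum) := by
    simp only [seqCost]
    rw [List.map_congr_left (fun m (_ : m ∈ ms) => cost_eq m), list_sum_comm]
    exact Finset.sum_congr rfl (fun j _ => list_sum_add ms _ _)
  rw [hcost]
  simp only [gfun]
  apply Finset.sum_le_sum
  intro j _
  have hb := list_abs_sum ms (fun m => sE m j)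
  have hd := list_abs_sum ms (fun m => dA m j)
  rw [hA j] at hd
  have : |Dfun (efun γ σ) (fun j' => (ms.map (fun m => sE m j')).sum) j|
      ≤ (ms.map (fun m => |dA m j|)).sum := hd
  linarith

lemma gfun_nonneg (e s : Fin n → ℝ) : 0 ≤ gfun e s :=
  Finset.sum_nonneg (fun i _ => by positivity)

lemma abs_le_gfun (e s : Fin n → ℝ) (i : Fin n) : |s i| ≤ gfun e s := by
  have h1 : |s i| + |Dfun e s i| ≤ gfun e s :=
    Finset.single_le_sum (f := fun j => |s j| + |Dfun e s j|)
      (fun j _ => by positivity) (Finset.mem_univ i)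
  have := abs_nonneg (Dfun e s i)
  linarith

lemma exists_min (e : Fin n → ℝ) : ∃ s0 : Fin n → ℝ, ∀ s, gfun e s0 ≤ gfun e s := by
  have hcont : Continuous (gfun e) := by
    apply continuous_finset_sum
    intro i _
    apply Continuous.add
    · exact (continuous_apply i).abs
    · apply Continuous.abs
      have hsp : Continuous fun s : Fin n → ℝ => sprev s i := by
        simp only [sprev]
        split
        · exact continuous_const
        · exact continuous_apply _
      exact (continuous_const.sub (continuous_apply i)).add hsp
  have hM0 : 0 ≤ gfun e 0 := gfun_nonneg e 0
  set K : Set (Fin n → ℝ) := Set.univ.pi (fun _ => Set.Icc (-(gfun e 0)) (gfun e 0)) with hK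
  have hKc : IsCompact K := isCompact_univ_pi (fun _ => isCompact_Icc)
  have h0K : (0 : Fin n → ℝ) ∈ K := by
    intro j _
    exact ⟨neg_nonpos.mpr hM0, hM0⟩
  obtain ⟨s0, hs0K, hmin⟩ := hKc.exists_isMinOn ⟨0, h0K⟩ hcont.continuousOn
  refine ⟨s0, fun s => ?_⟩
  by_cases hs : s ∈ K
  · exact isMinOn_iff.mp hmin s hs
  · have hex : ∃ i, gfun e 0 < |s i| := by
      by_contra hcon
      push_neg at hcon
      exact hs (fun i _ => ⟨neg_le_of_abs_le (hcon i), le_of_abs_le (hcon i)⟩)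
    obtain ⟨i, hi⟩ := hex
    have h1 : gfun e s0 ≤ gfun e 0 := isMinOn_iff.mp hmin 0 h0K
    have h2 : |s i| ≤ gfun e s := abs_le_gfun e s i
    linarith

lemma min_coop (e : Fin n → ℝ) (s0 : Fin n → ℝ) (hmin : ∀ s, gfun e s0 ≤ gfun e s) :
    ∀ i, 0 ≤ s0 i * Dfun e s0 i := by
  classical
  intro i
  by_contra hcon
  push_neg at hcon
  have hsign := mul_neg_iff.mp hcon
  set ε : ℝ := min |s0 i| |Dfun e s0 i| with hεdef
  have hεpos : 0 < ε := by
    rcases hsign with ⟨h1, h2⟩ | ⟨h1, h2⟩ <;>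
      (apply lt_min <;> simp [abs_pos] <;> intro h <;> simp [h] at h1 h2 <;> linarith)
  have hε1 : ε ≤ |s0 i| := min_le_left _ _
  have hε2 : ε ≤ |Dfun e s0 i| := min_le_right _ _
  set t : ℝ := if 0 < s0 i then ε else -ε with htdef
  have habs_t : |t| = ε := by
    rw [htdef]; split
    · exact abs_of_pos hεpos
    · rw [abs_neg]; exact abs_of_pos hεpos
  have habs1 : |s0 i - t| = |s0 i| - ε := by
    rcases hsign with ⟨h1, h2⟩ | ⟨h1, h2⟩
    · rw [htdef, if_pos h1]
      have hle : ε ≤ s0 i := by rw [abs_of_pos h1] at hε1; exact hε1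
      rw [abs_of_nonneg (by linarith), abs_of_pos h1]
    · rw [htdef, if_neg (by linarith)]
      have hle : ε ≤ -s0 i := by rw [abs_of_neg h1] at hε1; exact hε1
      rw [show s0 i - -ε = s0 i + ε by ring, abs_of_nonpos (by linarith), abs_of_neg h1]
      ring
  have habs2 : |Dfun e s0 i + t| = |Dfun e s0 i| - ε := by
    rcases hsign with ⟨h1, h2⟩ | ⟨h1, h2⟩
    · rw [htdef, if_pos h1]
      have hle : ε ≤ -Dfun e s0 i := by rw [abs_of_neg h2] at hε2; exact hε2
      rw [abs_of_nonpos (by linarith), abs_of_neg h2]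
      ring
    · rw [htdef, if_neg (by linarith)]
      have hle : ε ≤ Dfun e s0 i := by rw [abs_of_pos h2] at hε2; exact hε2
      rw [show Dfun e s0 i + -ε = Dfun e s0 i - ε by ring, abs_of_nonneg (by linarith),
        abs_of_pos h2]
  set s' : Fin n → ℝ := Function.update s0 i (s0 i - t) with hs'def
  have hsi' : s' i = s0 i - t := Function.update_self i _ s0
  have hother : ∀ j : Fin n, j ≠ i → s' j = s0 j := fun j hj => Function.update_of_ne hj _ _
  -- sprev s' at various positions
  have hsprev : ∀ j : Fin n, (j : ℕ) ≠ (i : ℕ) + 1 → sprev s' j = sprev s0 j := by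
    intro j hj
    by_cases hj0 : (j : ℕ) = 0
    · simp [sprev, hj0]
    · simp only [sprev, if_neg hj0]
      apply hother
      intro hcontra
      apply hj
      have := congrArg Fin.val hcontra
      simp at this
      omega
  have hDi : Dfun e s' i = Dfun e s0 i + t := by
    simp only [Dfun]
    rw [hsi', hsprev i (by omega)]
    ring
  have hDother : ∀ j : Fin n, j ≠ i → (j : ℕ) ≠ (i : ℕ) + 1 → Dfun e s' j = Dfun e s0 j := by
    intro j hj1 hj2
    simp only [Dfun]
    rw [hother j hj1, hsprev j hj2]
  have hTi : |s' i| + |Dfun e s' i| = (|s0 i| + |Dfun e s0 i|) - 2 * ε := by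
    rw [hsi', hDi, habs1, habs2]; ring
  have hTother : ∀ j : Fin n, j ≠ i → (j : ℕ) ≠ (i : ℕ) + 1 →
      |s' j| + |Dfun e s' j| = |s0 j| + |Dfun e s0 j| := by
    intro j hj1 hj2
    rw [hother j hj1, hDother j hj1 hj2]
  have hfinal : gfun e s' < gfun e s0 := by
    by_cases hlt : (i : ℕ) + 1 < n
    · set ip : Fin n := ⟨(i : ℕ) + 1, hlt⟩ with hip
      have hipne : ip ≠ i := by
        intro h
        have := congrArg Fin.val h
        simp [hip] at this
      have hTip : |s' ip| + |Dfun e s' ip| ≤ (|s0 ip| + |Dfun e s0 ip|) + ε := by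
        have h1 : s' ip = s0 ip := hother ip hipne
        have h2 : sprev s' ip = s0 i - t := by
          simp only [sprev, hip]
          rw [if_neg (by omega)]
          have : (⟨(i : ℕ) + 1 - 1, lt_of_le_of_lt (Nat.sub_le _ _) hlt⟩ : Fin n) = i :=
            Fin.ext (by simp)
          rw [this, hsi']
        have h3 : sprev s0 ip = s0 i := by
          simp only [sprev, hip]
          rw [if_neg (by omega)]
          exact congrArg s0 (Fin.ext (by simp))
        have h4 : Dfun e s' ip = Dfun e s0 ip - t := by
          simp only [Dfun]
          rw [h1, h2, h3]
          ring
        rw [h1, h4]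
        have h5 : |Dfun e s0 ip - t| ≤ |Dfun e s0 ip| + |t| := abs_sub _ _
        rw [habs_t] at h5
        linarith
      -- sum decomposition over {i, ip}
      have hsub : ({i, ip} : Finset (Fin n)) ⊆ Finset.univ := Finset.subset_univ _
      have hpair : ∀ f : Fin n → ℝ,
          (∑ j, f j) = (∑ j ∈ Finset.univ \ {i, ip}, f j) + (f i + f ip) := by
        intro f
        rw [← Finset.sum_pair (Ne.symm hipne)]
        exact (Finset.sum_sdiff hsub).symm
      have hdiff : ∀ j ∈ Finset.univ \ ({i, ip} : Finset (Fin n)),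
          |s' j| + |Dfun e s' j| = |s0 j| + |Dfun e s0 j| := by
        intro j hj
        simp only [Finset.mem_sdiff, Finset.mem_insert, Finset.mem_singleton] at hj
        push_neg at hj
        refine hTother j hj.2.1 ?_
        intro hval
        exact hj.2.2 (Fin.ext (by simp [hip, hval]))
      calc gfun e s' = (∑ j ∈ Finset.univ \ {i, ip}, (|s' j| + |Dfun e s' j|))
            + ((|s' i| + |Dfun e s' i|) + (|s' ip| + |Dfun e s' ip|)) := hpair _
        _ ≤ (∑ j ∈ Finset.univ \ {i, ip}, (|s0 j| + |Dfun e s0 j|))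
            + (((|s0 i| + |Dfun e s0 i|) - 2 * ε) + ((|s0 ip| + |Dfun e s0 ip|) + ε)) := by
              rw [Finset.sum_congr rfl hdiff, hTi]
              linarith
        _ = gfun e s0 - ε := by rw [gfun, hpair (fun j => |s0 j| + |Dfun e s0 j|)]; ring
        _ < gfun e s0 := by linarith
    · -- i is the last position
      have hsingle : ∀ f : Fin n → ℝ,
          (∑ j, f j) = (∑ j ∈ Finset.univ \ {i}, f j) + f i := by
        intro f
        rw [← Finset.sum_sdiff (Finset.subset_univ {i})]
        simp
      have hdiff : ∀ j ∈ Finset.univ \ ({i} : Finset (Fin n)),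
          |s' j| + |Dfun e s' j| = |s0 j| + |Dfun e s0 j| := by
        intro j hj
        simp only [Finset.mem_sdiff, Finset.mem_singleton] at hj
        refine hTother j hj.2 ?_
        intro hval
        have : (j : ℕ) < n := j.isLt
        omega
      calc gfun e s' = (∑ j ∈ Finset.univ \ {i}, (|s' j| + |Dfun e s' j|))
            + (|s' i| + |Dfun e s' i|) := hsingle _
        _ = (∑ j ∈ Finset.univ \ {i}, (|s0 j| + |Dfun e s0 j|))
            + ((|s0 i| + |Dfun e s0 i|) - 2 * ε) := by
              rw [Finset.sum_congr rfl hdiff, hTi]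
        _ < gfun e s0 := by
              rw [gfun, hsingle (fun j => |s0 j| + |Dfun e s0 j|)]
              linarith
  exact absurd (hmin s') (not_le.mpr hfinal)

/-- there is a chronological co-operative sequence of mixed moves aligning
`γ` to `σ` of cost `d_N(γ, σ)`, and likewise a reverse chronological co-operative one. -/
theorem statement6 (n : ℕ) (γ σ : Fin n → ℝ) :
    (∃ s d : Fin n → ℝ, chronApply s d γ = σ ∧ Cooperative s d ∧
      chronCost s d = dN γ σ) ∧
    (∃ s d : Fin n → ℝ, revChronApply s d γ = σ ∧ Cooperative s d ∧
      chronCost s d = dN γ σ) := by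
  classical
  obtain ⟨s0, hmin⟩ := exists_min (efun γ σ)
  have hcoop : Cooperative s0 (Dfun (efun γ σ) s0) := min_coop _ s0 hmin
  have hchron : chronApply s0 (Dfun (efun γ σ) s0) γ = σ :=
    chron_foldl_aligns γ σ s0 _ (List.Perm.refl _)
  have hrev : revChronApply s0 (Dfun (efun γ σ) s0) γ = σ :=
    chron_foldl_aligns γ σ s0 _ (List.reverse_perm _)
  have hcostval : chronCost s0 (Dfun (efun γ σ) s0) = gfun (efun γ σ) s0 := rfl
  have hmem : gfun (efun γ σ) s0 ∈
      {c : ℝ | ∃ ms : List (Move n), applySeq ms γ = σ ∧ seqCost ms = c} := by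
    refine ⟨msOf s0 (Dfun (efun γ σ) s0), ?_, ?_⟩
    · rw [applySeq_msOf]; exact hchron
    · rw [seqCost_msOf]; exact hcostval
  have hlb : ∀ c ∈ {c : ℝ | ∃ ms : List (Move n), applySeq ms γ = σ ∧ seqCost ms = c},
      gfun (efun γ σ) s0 ≤ c := by
    rintro c ⟨ms, hms, rfl⟩
    obtain ⟨B, hB⟩ := cost_lower γ σ ms hms
    exact le_trans (hmin B) hB
  have hdN : dN γ σ = gfun (efun γ σ) s0 := by
    apply le_antisymm
    · exact csInf_le ⟨gfun (efun γ σ) s0, hlb⟩ hmem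
    · exact le_csInf ⟨gfun (efun γ σ) s0, hmem⟩ hlb
  have hcost : chronCost s0 (Dfun (efun γ σ) s0) = dN γ σ := by rw [hcostval, hdN]
  exact ⟨⟨s0, Dfun (efun γ σ) s0, hchron, hcoop, hcost⟩,
    ⟨s0, Dfun (efun γ σ) s0, hrev, hcoop, hcost⟩⟩

end TimedAlign
end

section
/- Every stable, co-operative, reverse chronological sequence of mixed moves aligning a timing function γ of length n to a timing function σ of length n is cross co-operative, i.e., s_i·d_{i+1} ≤ 0 for all i < n. -/
/-!
Comparing flows at position `i + 1` before and after the run gives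
`d_{i+1} = r_{i+1} + s_i`, so `s_i · d_{i+1} = s_i (r_{i+1} + s_i)`. Each of the three stable
choices of `s_i` makes this nonpositive: it is `0` for `s_i = 0` and for `s_i = -r_{i+1}`, and
for `s_i = e_i` the factor `r_{i+1} + e_i` has the sign of `r_{i+1}`, opposite to `e_i`.
-/

open Finset

namespace TimedAlign

variable {n : ℕ}

theorem foldl_mixed_apply (s d : Fin n → ℝ) (L : List (Fin n)) (γ : Fin n → ℝ) (j : Fin n) :
    L.foldl (fun τ i => mixed (s i) (d i) i τ) γ j
      = γ j + (L.map fun i => (if j = i then s i else 0) + (if i ≤ j then d i else 0)).sum := by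
  induction L generalizing γ with
  | nil => simp
  | cons a L ih =>
    have hmixed : mixed (s a) (d a) a γ j
        = γ j + ((if j = a then s a else 0) + (if a ≤ j then d a else 0)) := by
      simp only [mixed, stamp, delay]
      split_ifs <;> ring
    rw [List.foldl_cons, ih, hmixed, List.map_cons, List.sum_cons]
    ring

theorem revChronApply_apply (s d γ : Fin n → ℝ) (j : Fin n) :
    revChronApply s d γ j = γ j + s j + ∑ i ∈ Iic j, d i := by
  rw [revChronApply, foldl_mixed_apply, List.map_reverse, List.sum_reverse, ← Fin.sum_univ_def,
    sum_add_distrib, sum_ite_eq, ← sum_filter, filter_ge_eq_Iic]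
  simp [add_assoc]

theorem prev_succ (τ : Fin n → ℝ) (i : Fin n) (h : (i : ℕ) + 1 < n) :
    prev τ ⟨(i : ℕ) + 1, h⟩ = τ i := by
  simp [prev]

theorem Iic_succ_eq_insert (i : Fin n) (h : (i : ℕ) + 1 < n) :
    Iic (⟨(i : ℕ) + 1, h⟩ : Fin n) = insert ⟨(i : ℕ) + 1, h⟩ (Iic i) := by
  refine Finset.ext fun k => ?_
  simp only [mem_Iic, mem_insert, Fin.le_def, Fin.ext_iff]
  omega

theorem flow_revChronApply_succ (s d γ : Fin n → ℝ) (i : Fin n) (h : (i : ℕ) + 1 < n) :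
    flow (revChronApply s d γ) ⟨(i : ℕ) + 1, h⟩
      = flow γ ⟨(i : ℕ) + 1, h⟩ + s ⟨(i : ℕ) + 1, h⟩ - s i + d ⟨(i : ℕ) + 1, h⟩ := by
  have hnotin : (⟨(i : ℕ) + 1, h⟩ : Fin n) ∉ Iic i := by
    simp [Fin.le_def]
  simp only [flow, prev_succ _ _ h, revChronApply_apply, Iic_succ_eq_insert i h,
    sum_insert hnotin]
  ring

theorem stableStamp_mul_add_self_nonpos (e r : ℝ) :
    stableStamp e r * (r + stableStamp e r) ≤ 0 := by
  unfold stableStamp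
  split_ifs with hsign habs
  · simp
  · have her : e * r < 0 := lt_of_not_ge hsign
    have hsq : |e| * |e| ≤ |e| * |r| := mul_le_mul_of_nonneg_left habs.le (abs_nonneg e)
    nlinarith [abs_mul_abs_self e, abs_mul e r, abs_of_neg her]
  · simp

theorem statement8_general (n : ℕ) (γ σ s d : Fin n → ℝ)
    (halign : revChronApply s d γ = σ) (hstable : Stable γ σ s) :
    CrossCooperative s d := by
  intro i h
  have hdelay : d ⟨(i : ℕ) + 1, h⟩
      = (flow σ ⟨(i : ℕ) + 1, h⟩ - flow γ ⟨(i : ℕ) + 1, h⟩ - s ⟨(i : ℕ) + 1, h⟩) + s i := by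
    rw [← halign, flow_revChronApply_succ]
    ring
  rw [hdelay, hstable i h]
  exact stableStamp_mul_add_self_nonpos _ _

/-- every stable, co-operative, reverse chronological sequence of mixed moves
aligning `γ` to `σ` is cross co-operative. -/
theorem statement8 (n : ℕ) (γ σ s d : Fin n → ℝ)
    (halign : revChronApply s d γ = σ) (hcoop : Cooperative s d)
    (hlast : LastStampZero s) (hstable : Stable γ σ s) :
    CrossCooperative s d :=
  statement8_general n γ σ s d halign hstable

end TimedAlign
end

section
/- For any two timing functions γ and σ of length n, the stable, co-operative, reverse chronological sequence of mixed moves aligning γ to σ has minimal cost among all sequences of stamp and delay moves aligning γ to σ; that is, its cost equals d_N(γ, σ). -/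
open Finset

namespace TimedAlign

variable {n : ℕ}

/-!
A sequence of moves acts on flows only through its total stamp `b i` and total delay `D i` at
each position, and costs at least `∑ |b i| + |D i|`; alignment forces `D = E - flow b`, where
`E = flow σ - flow γ`. So it suffices to show that the stable stamps minimise
`∑ |b i| + |E i - flow b i|` over all stamp profiles `b`.

`stableStamp e r` is the projection of `e` onto the segment `[[0, -r]]`, and the stable run has
residuals `r i = E i - s i = residual (E i) (r (i + 1))`, with `r n = 0`. Backward dynamic
programming shows that the positions `≥ k`, preceded by stamp `p`, cost at least
`|residual (E k + p) (r (k + 1))| + ∑_{i > k} |r i|`; at `k = 0` this is `∑ |r i|`.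
The stable run pays exactly that: `s (i - 1)` lies between `0` and `-r i`, so its delay
`r i + s (i - 1)` has size `|r i| - |s (i - 1)|`, and the stamp costs telescope away since
`s (n - 1) = 0`.
-/

noncomputable def residual (e r : ℝ) : ℝ := e - stableStamp e r

lemma stableStamp_mem_uIcc (e r : ℝ) : stableStamp e r ∈ Set.uIcc 0 (-r) := by
  unfold stableStamp
  rcases le_total 0 r with hr | hr
  · rw [Set.uIcc_of_ge (by linarith), Set.mem_Icc]
    split_ifs with h₁ h₂
    · exact ⟨by linarith, le_rfl⟩
    · rw [abs_of_nonneg hr] at h₂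
      constructor <;> cases abs_cases e <;> nlinarith
    · exact ⟨le_rfl, by linarith⟩
  · rw [Set.uIcc_of_le (by linarith), Set.mem_Icc]
    split_ifs with h₁ h₂
    · exact ⟨le_rfl, by linarith⟩
    · rw [abs_of_nonpos hr] at h₂
      constructor <;> cases abs_cases e <;> nlinarith
    · exact ⟨by linarith, le_rfl⟩

-- The variational inequality characterising `stableStamp e r` as the projection onto `[[0, -r]]`.
lemma residual_mul_sub_stableStamp_nonpos {e r c : ℝ} (hc : c ∈ Set.uIcc 0 (-r)) :
    residual e r * (c - stableStamp e r) ≤ 0 := by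
  unfold residual stableStamp
  rcases le_total 0 r with hr | hr
  · rw [Set.uIcc_of_ge (by linarith), Set.mem_Icc] at hc
    split_ifs with h₁ h₂
    · rcases hr.eq_or_lt with rfl | hr
      · simp [le_antisymm hc.2 (by simpa using hc.1)]
      · have : 0 ≤ e := by nlinarith
        nlinarith
    · simp
    · rw [abs_of_nonneg hr] at h₂
      cases abs_cases e <;> nlinarith
  · rw [Set.uIcc_of_le (by linarith), Set.mem_Icc] at hc
    split_ifs with h₁ h₂
    · rcases hr.eq_or_lt with rfl | hr
      · simp [le_antisymm (by simpa using hc.2) hc.1]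
      · have : e ≤ 0 := by nlinarith
        nlinarith
    · simp
    · rw [abs_of_nonpos hr] at h₂
      cases abs_cases e <;> nlinarith

lemma abs_le_abs_of_sq_le_mul {x y : ℝ} (h : x ^ 2 ≤ x * y) : |x| ≤ |y| := by
  rcases eq_or_ne x 0 with rfl | hx
  · simp
  · refine le_of_mul_le_mul_left ?_ (abs_pos.2 hx)
    rw [abs_mul_abs_self, ← abs_mul, ← sq]
    exact h.trans (le_abs_self _)

lemma stableStamp_zero_right (e : ℝ) : stableStamp e 0 = 0 := by
  simp [stableStamp]

lemma residual_zero_right (e : ℝ) : residual e 0 = e := by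
  simp [residual, stableStamp_zero_right]

lemma abs_add_stableStamp (e r : ℝ) : |r + stableStamp e r| = |r| - |stableStamp e r| := by
  rcases Set.mem_uIcc.1 (stableStamp_mem_uIcc e r) with ⟨h₁, h₂⟩ | ⟨h₁, h₂⟩
  · rw [abs_of_nonneg h₁, abs_of_nonpos (by linarith), abs_of_nonpos (by linarith)]; ring
  · rw [abs_of_nonpos h₂, abs_of_nonneg (by linarith), abs_of_nonneg (by linarith)]; ring

lemma abs_residual_le {e r c : ℝ} (hc : c ∈ Set.uIcc 0 (-r)) : |residual e r| ≤ |e - c| := by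
  have := residual_mul_sub_stableStamp_nonpos (e := e) hc
  refine abs_le_abs_of_sq_le_mul ?_
  have hec : e - c = residual e r - (c - stableStamp e r) := by unfold residual; ring
  rw [hec]
  nlinarith

lemma abs_residual_le_abs_sub_add (a b r : ℝ) : |residual a r| ≤ |a - b| + |residual b r| :=
  calc |residual a r| ≤ |a - stableStamp b r| := abs_residual_le (stableStamp_mem_uIcc b r)
    _ = |(a - b) + residual b r| := by unfold residual; ring_nf
    _ ≤ |a - b| + |residual b r| := abs_add_le _ _

lemma abs_residual_le_abs_residual_add {e r b : ℝ} (h : 0 ≤ b * residual e r) :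
    |residual e r| ≤ |residual (e + b) r| := by
  have := residual_mul_sub_stableStamp_nonpos (e := e) (stableStamp_mem_uIcc (e + b) r)
  refine abs_le_abs_of_sq_le_mul ?_
  have : residual (e + b) r = residual e r + b + (stableStamp e r - stableStamp (e + b) r) := by
    unfold residual; ring
  rw [this]
  nlinarith

lemma abs_residual_residual_add_le (e r b : ℝ) :
    |residual b (residual e r)| + |residual e r| ≤ |b| + |residual (e + b) r| := by
  set ρ := residual e r
  show |b - stableStamp b ρ| + |ρ| ≤ _
  unfold stableStamp
  split_ifs with h₁ h₂
  · have := abs_residual_le_abs_residual_add (mul_comm b ρ ▸ h₁ : 0 ≤ b * ρ)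
    rw [sub_zero]
    linarith
  · have := abs_residual_le_abs_sub_add e (e + b) r
    rw [show e - (e + b) = -b by ring, abs_neg] at this
    rw [sub_self, abs_zero]
    linarith
  · have : |b - -ρ| + |ρ| = |b| := by
      rw [not_le] at h₁
      rw [not_lt] at h₂
      rw [sub_neg_eq_add]
      rcases abs_cases b with ⟨hb, _⟩ | ⟨hb, _⟩ <;>
        rcases abs_cases ρ with ⟨hρ, _⟩ | ⟨hρ, _⟩ <;>
        rcases abs_cases (b + ρ) with ⟨hbρ, _⟩ | ⟨hbρ, _⟩ <;> nlinarith
    linarith [abs_nonneg (residual (e + b) r)]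

lemma abs_residual_residual_le (a e r b : ℝ) :
    |residual a (residual e r)| + |residual e r| ≤ |b| + |a - b| + |residual (e + b) r| := by
  linarith [abs_residual_le_abs_sub_add a b (residual e r), abs_residual_residual_add_le e r b]

def prevStamp (b : ℕ → ℝ) : ℕ → ℝ
  | 0 => 0
  | i + 1 => b i

def stampCostNat (n : ℕ) (e b : ℕ → ℝ) : ℝ :=
  ∑ i ∈ range n, (|b i| + |e i - (b i - prevStamp b i)|)

section StableResiduals

variable {e r : ℕ → ℝ}

lemma abs_residual_add_sum_Ico_le (hr : ∀ i < n, r i = residual (e i) (r (i + 1)))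
    (hrn : r n = 0) (b : ℕ → ℝ) {k : ℕ} (hk : k < n) :
    |residual (e k + prevStamp b k) (r (k + 1))| + ∑ i ∈ Ico (k + 1) n, |r i|
      ≤ ∑ i ∈ Ico k n, (|b i| + |e i - (b i - prevStamp b i)|) := by
  induction hj : n - (k + 1) generalizing k with
  | zero =>
    obtain rfl : n = k + 1 := by omega
    rw [sum_eq_sum_Ico_succ_bot hk, hrn, residual_zero_right, Ico_self, sum_empty, sum_empty,
      add_zero, add_zero, show e k + prevStamp b k = b k + (e k - (b k - prevStamp b k)) by ring]
    exact abs_add_le _ _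
  | succ j ih =>
    have hk' : k + 1 < n := by omega
    have step := abs_residual_residual_le (e k + prevStamp b k) (e (k + 1)) (r (k + 1 + 1)) (b k)
    rw [← hr (k + 1) hk'] at step
    have tail : |residual (e (k + 1) + b k) (r (k + 1 + 1))| + ∑ i ∈ Ico (k + 1 + 1) n, |r i|
        ≤ ∑ i ∈ Ico (k + 1) n, (|b i| + |e i - (b i - prevStamp b i)|) := ih hk' (by omega)
    rw [sum_eq_sum_Ico_succ_bot hk, sum_eq_sum_Ico_succ_bot hk',
      show e k - (b k - prevStamp b k) = e k + prevStamp b k - b k by ring]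
    linarith

lemma sum_abs_le_stampCostNat (hr : ∀ i < n, r i = residual (e i) (r (i + 1)))
    (hrn : r n = 0) (b : ℕ → ℝ) : ∑ i ∈ range n, |r i| ≤ stampCostNat n e b := by
  rcases Nat.eq_zero_or_pos n with rfl | hn
  · simp [stampCostNat]
  · have := abs_residual_add_sum_Ico_le hr hrn b hn
    rwa [prevStamp, add_zero, ← hr 0 hn, ← sum_eq_sum_Ico_succ_bot hn (fun i => |r i|),
      ← range_eq_Ico] at this

lemma stampCostNat_sub_residual (hr : ∀ i < n, r i = residual (e i) (r (i + 1)))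
    (hrn : r n = 0) :
    stampCostNat n e (fun i => e i - r i) = ∑ i ∈ range n, |r i| := by
  set s : ℕ → ℝ := fun i => e i - r i
  have hs : ∀ i < n, s i = stableStamp (e i) (r (i + 1)) := fun i hi => by
    simp only [s, hr i hi, residual, sub_sub_cancel]
  have hterm : ∀ i < n, |e i - (s i - prevStamp s i)| = |r i| - |prevStamp s i| := by
    rintro (_ | i) hi
    · simp [s, prevStamp]
    · have hdelay : e (i + 1) - (s (i + 1) - prevStamp s (i + 1)) = r (i + 1) + s i := by
        simp only [s, prevStamp]; ring
      rw [hdelay, hs i (by omega), abs_add_stableStamp, prevStamp, hs i (by omega)]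
  obtain _ | m := n
  · simp [stampCostNat]
  · have hlast : s m = 0 := by rw [hs m (by omega), hrn, stableStamp_zero_right]
    have htel : ∑ i ∈ range (m + 1), |prevStamp s i| = ∑ i ∈ range (m + 1), |s i| := by
      rw [sum_range_succ', sum_range_succ, hlast]
      simp [prevStamp]
    rw [stampCostNat, sum_congr rfl fun i hi => by rw [hterm i (mem_range.1 hi)], sum_add_distrib,
      sum_sub_distrib, htel]
    ring

end StableResiduals

lemma prev_add (f g : Fin n → ℝ) : prev (f + g) = prev f + prev g := by
  funext i
  simp only [prev, Pi.add_apply]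
  split_ifs <;> simp

lemma flow_add (f g : Fin n → ℝ) : flow (f + g) = flow f + flow g := by
  funext i
  simp only [flow, prev_add, Pi.add_apply]
  ring

lemma flow_zero : flow (0 : Fin n → ℝ) = 0 := by
  funext i
  simp [flow, prev]

lemma stamp_eq_add (γ : Fin n → ℝ) (x : ℝ) (i : Fin n) :
    stamp γ x i = γ + Pi.single i x := by
  funext j
  simp only [stamp, Pi.add_apply, Pi.single_apply]
  split_ifs <;> simp

lemma flow_delay (γ : Fin n → ℝ) (x : ℝ) (i : Fin n) :
    flow (delay γ x i) = flow γ + Pi.single i x := by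
  funext j
  simp only [flow, prev, delay, Pi.add_apply, Pi.single_apply, Fin.le_def, Fin.ext_iff]
  split_ifs <;> first | ring1 | (exfalso; omega)

def Move.stampPart : Move n → Fin n → ℝ
  | .stampM x i => Pi.single i x
  | .delayM _ _ => 0

def Move.delayPart : Move n → Fin n → ℝ
  | .stampM _ _ => 0
  | .delayM x i => Pi.single i x

lemma Move.flow_apply (m : Move n) (γ : Fin n → ℝ) :
    flow (m.apply γ) = flow γ + flow m.stampPart + m.delayPart := by
  cases m with
  | stampM x i => simp [Move.apply, Move.stampPart, Move.delayPart, stamp_eq_add, flow_add]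
  | delayM x i => simp [Move.apply, Move.stampPart, Move.delayPart, flow_delay, flow_zero]

lemma sum_abs_single (i : Fin n) (x : ℝ) : ∑ j, |Pi.single i x j| = |x| := by
  simp [Pi.single_apply, apply_ite]

lemma Move.cost_eq_sum (m : Move n) : m.cost = ∑ i, (|m.stampPart i| + |m.delayPart i|) := by
  cases m <;> simp [Move.cost, Move.stampPart, Move.delayPart, sum_abs_single]

def totalStamp (ms : List (Move n)) : Fin n → ℝ := (ms.map Move.stampPart).sum

def totalDelay (ms : List (Move n)) : Fin n → ℝ := (ms.map Move.delayPart).sum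

lemma totalStamp_cons (m : Move n) (ms : List (Move n)) :
    totalStamp (m :: ms) = m.stampPart + totalStamp ms := List.sum_cons

lemma totalDelay_cons (m : Move n) (ms : List (Move n)) :
    totalDelay (m :: ms) = m.delayPart + totalDelay ms := List.sum_cons

lemma flow_applySeq (ms : List (Move n)) (γ : Fin n → ℝ) :
    flow (applySeq ms γ) = flow γ + flow (totalStamp ms) + totalDelay ms := by
  induction ms generalizing γ with
  | nil => simp [applySeq, totalStamp, totalDelay, flow_zero]
  | cons m ms ih =>
    rw [show applySeq (m :: ms) γ = applySeq ms (m.apply γ) from rfl, ih, m.flow_apply,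
      totalStamp_cons, totalDelay_cons, flow_add]
    abel

lemma sum_abs_le_seqCost (ms : List (Move n)) :
    ∑ i, (|totalStamp ms i| + |totalDelay ms i|) ≤ seqCost ms := by
  induction ms with
  | nil => simp [totalStamp, totalDelay, seqCost]
  | cons m ms ih =>
    have hterm (i : Fin n) : |totalStamp (m :: ms) i| + |totalDelay (m :: ms) i|
        ≤ (|m.stampPart i| + |m.delayPart i|) + (|totalStamp ms i| + |totalDelay ms i|) := by
      rw [totalStamp_cons, totalDelay_cons, Pi.add_apply, Pi.add_apply]
      linarith [abs_add_le (m.stampPart i) (totalStamp ms i),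
        abs_add_le (m.delayPart i) (totalDelay ms i)]
    calc _ ≤ _ := sum_le_sum fun i _ => hterm i
      _ = m.cost + ∑ i, (|totalStamp ms i| + |totalDelay ms i|) := by
        rw [sum_add_distrib, m.cost_eq_sum]
      _ ≤ m.cost + seqCost ms := by linarith

lemma sum_map_finRange_reverse {M : Type*} [AddCommMonoid M] (f : Fin n → M) :
    ((List.finRange n).reverse.map f).sum = ∑ i, f i := by
  rw [List.map_reverse, List.sum_reverse, ← List.ofFn_eq_map, List.sum_ofFn]

def mixedMoves (s d : Fin n → ℝ) (l : List (Fin n)) : List (Move n) :=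
  l.flatMap fun i => [.delayM (d i) i, .stampM (s i) i]

section MixedMoves

variable (s d : Fin n → ℝ)

lemma applySeq_mixedMoves (l : List (Fin n)) (γ : Fin n → ℝ) :
    applySeq (mixedMoves s d l) γ = l.foldl (fun τ i => mixed (s i) (d i) i τ) γ := by
  induction l generalizing γ with
  | nil => rfl
  | cons i l ih => exact ih _

lemma seqCost_mixedMoves (l : List (Fin n)) :
    seqCost (mixedMoves s d l) = (l.map fun i => |s i| + |d i|).sum := by
  induction l with
  | nil => rfl
  | cons i l ih =>
    show |d i| + (|s i| + seqCost (mixedMoves s d l)) = _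
    rw [ih, List.map_cons, List.sum_cons]
    ring

lemma totalStamp_mixedMoves (l : List (Fin n)) :
    totalStamp (mixedMoves s d l) = (l.map fun i => Pi.single i (s i)).sum := by
  induction l with
  | nil => rfl
  | cons i l ih =>
    show totalStamp (.delayM (d i) i :: .stampM (s i) i :: mixedMoves s d l) = _
    rw [totalStamp_cons, totalStamp_cons, ih]
    simp [Move.stampPart]

lemma totalDelay_mixedMoves (l : List (Fin n)) :
    totalDelay (mixedMoves s d l) = (l.map fun i => Pi.single i (d i)).sum := by
  induction l with
  | nil => rfl
  | cons i l ih =>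
    show totalDelay (.delayM (d i) i :: .stampM (s i) i :: mixedMoves s d l) = _
    rw [totalDelay_cons, totalDelay_cons, ih]
    simp [Move.delayPart]

lemma flow_revChronApply (γ : Fin n → ℝ) :
    flow (revChronApply s d γ) = flow γ + flow s + d := by
  rw [revChronApply, ← applySeq_mixedMoves, flow_applySeq, totalStamp_mixedMoves,
    totalDelay_mixedMoves, sum_map_finRange_reverse, sum_map_finRange_reverse, univ_sum_single,
    univ_sum_single]

lemma seqCost_mixedMoves_finRange_reverse :
    seqCost (mixedMoves s d (List.finRange n).reverse) = chronCost s d := by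
  rw [seqCost_mixedMoves, sum_map_finRange_reverse, chronCost]

end MixedMoves

def natExtend (f : Fin n → ℝ) (i : ℕ) : ℝ := if h : i < n then f ⟨i, h⟩ else 0

-- The cheapest run with total stamps `b`: alignment forces the delays `E - flow b`.
def stampCost (E b : Fin n → ℝ) : ℝ := ∑ i, (|b i| + |E i - flow b i|)

lemma stampCost_eq_stampCostNat (E b : Fin n → ℝ) :
    stampCost E b = stampCostNat n (natExtend E) (natExtend b) := by
  rw [stampCost, stampCostNat, ← Fin.sum_univ_eq_sum_range]
  refine sum_congr rfl fun i _ => ?_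
  have hprev : prevStamp (natExtend b) i = prev b i := by
    rcases i with ⟨_ | k, hk⟩
    · rfl
    · simp [prevStamp, prev, natExtend, show k < n by omega]
  simp [natExtend, flow, hprev]

theorem stampCost_le_of_stable (E s b : Fin n → ℝ)
    (hs : ∀ i : Fin n, ∀ h : (i : ℕ) + 1 < n,
      s i = stableStamp (E i) (E ⟨(i : ℕ) + 1, h⟩ - s ⟨(i : ℕ) + 1, h⟩))
    (hlast : LastStampZero s) : stampCost E s ≤ stampCost E b := by
  -- Extending by zero turns `LastStampZero s` into the boundary condition `r n = 0`.
  set r := natExtend (E - s)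
  have hrn : r n = 0 := by simp [r, natExtend]
  have hr : ∀ i < n, r i = residual (natExtend E i) (r (i + 1)) := by
    intro i hi
    rcases (Nat.succ_le_of_lt hi).eq_or_lt with h | h
    · simp [r, natExtend, ← h, residual_zero_right, hlast ⟨i, hi⟩ h]
    · simp [r, natExtend, hi, h, residual, ← hs ⟨i, hi⟩ h]
  have hs' : natExtend s = fun i => natExtend E i - r i := by
    funext i
    by_cases hi : i < n <;> simp [r, natExtend, hi]
  rw [stampCost_eq_stampCostNat, stampCost_eq_stampCostNat, hs', stampCostNat_sub_residual hr hrn]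
  exact sum_abs_le_stampCostNat hr hrn _

theorem statement10_general (n : ℕ) (γ σ s d : Fin n → ℝ)
    (halign : revChronApply s d γ = σ)
    (hlast : LastStampZero s) (hstable : Stable γ σ s) :
    chronCost s d = dN γ σ := by
  set E := flow σ - flow γ with hE
  have hd : d = E - flow s := by
    rw [hE, ← halign, flow_revChronApply]
    abel
  have hlower (ms : List (Move n)) (hms : applySeq ms γ = σ) : chronCost s d ≤ seqCost ms := by
    have hD : totalDelay ms = E - flow (totalStamp ms) := by
      rw [hE, ← hms, flow_applySeq]
      abel
    calc chronCost s d = stampCost E s := by rw [hd]; rfl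
      _ ≤ stampCost E (totalStamp ms) := stampCost_le_of_stable E s _ hstable hlast
      _ = ∑ i, (|totalStamp ms i| + |totalDelay ms i|) := by rw [hD]; rfl
      _ ≤ seqCost ms := sum_abs_le_seqCost ms
  rw [dN]
  refine (IsLeast.csInf_eq ⟨?_, ?_⟩).symm
  · exact ⟨mixedMoves s d (List.finRange n).reverse, by rw [applySeq_mixedMoves]; exact halign,
      seqCost_mixedMoves_finRange_reverse s d⟩
  · rintro c ⟨ms, hms, rfl⟩
    exact hlower ms hms

/-- the stable, co-operative, reverse chronological sequence of mixed moves
aligning `γ` to `σ` has minimal cost among all sequences of stamp and delay moves aligning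
`γ` to `σ`: its cost equals `d_N(γ, σ)`. -/
theorem statement10 (n : ℕ) (γ σ s d : Fin n → ℝ)
    (halign : revChronApply s d γ = σ) (hcoop : Cooperative s d)
    (hlast : LastStampZero s) (hstable : Stable γ σ s) :
    chronCost s d = dN γ σ :=
  statement10_general n γ σ s d halign hlast hstable

end TimedAlign
end

section
/- Let N be a sequential process model of length n given by intervals [a_i, b_i] with a_i ≤ b_i for all i, and let σ be a timing function of length n (the observed trace). Let γ be the timing function defined by f_γ(i) = argmin_{x ∈ [a_i, b_i]} |x − f_σ(i)| (i.e., f_γ(i) = max(a_i, min(b_i, f_σ(i)))). Then γ ∈ L(N) and γ minimizes the mixed-moves distance to σ over the language: for every α ∈ L(N), d_N(γ, σ) ≤ d_N(α, σ). -/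
open Finset

namespace TimedAlign

variable {n : ℕ}

/-- Membership in the language of a sequential process model given by intervals
`[a_i, b_i]`: each successive duration `t_i - t_{i-1}` (with `t₀ = 0`) lies in `[a_i, b_i]`. -/
def inLanguage (a b : Fin n → ℝ) (τ : Fin n → ℝ) : Prop :=
  ∀ i : Fin n, flow τ i ∈ Set.Icc (a i) (b i)

-- ==== auxiliary ====

def cum (d : Fin n → ℝ) (j : Fin n) : ℝ := ∑ i ∈ Finset.Iic j, d i

def cost2 (s d : Fin n → ℝ) : ℝ := ∑ i, (|s i| + |d i|)

lemma seqCost_nonneg (ms : List (Move n)) : 0 ≤ seqCost ms := by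
  apply List.sum_nonneg
  intro x hx
  obtain ⟨m, _, rfl⟩ := List.mem_map.1 hx
  cases m <;> simp [Move.cost, abs_nonneg]

lemma applySeq_cons (m : Move n) (ms : List (Move n)) (τ : Fin n → ℝ) :
    applySeq (m :: ms) τ = applySeq ms (m.apply τ) := rfl

lemma seqCost_cons (m : Move n) (ms : List (Move n)) :
    seqCost (m :: ms) = m.cost + seqCost ms := by simp [seqCost]

lemma sum_update (g : Fin n → ℝ) (i : Fin n) (Y : ℝ) :
    ∑ j, Function.update g i Y j = Y + ((∑ j, g j) - g i) := by
  rw [Finset.sum_update_of_mem (Finset.mem_univ i)]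
  rw [← Finset.add_sum_erase _ g (Finset.mem_univ i)]
  simp only [Finset.sdiff_singleton_eq_erase]
  ring

lemma sum_abs_update (f : Fin n → ℝ) (i : Fin n) (Y : ℝ) :
    ∑ j, |Function.update f i Y j| = |Y| + ((∑ j, |f j|) - |f i|) := by
  have h1 : ∑ j, |Function.update f i Y j|
      = ∑ j, Function.update (fun j => |f j|) i |Y| j := by
    apply Finset.sum_congr rfl
    intro j _
    by_cases h : j = i
    · subst h; simp
    · simp [Function.update_of_ne h]
  rw [h1, sum_update]

lemma cum_update_le (d : Fin n → ℝ) (i j : Fin n) (x : ℝ) (h : i ≤ j) :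
    cum (Function.update d i (d i + x)) j = cum d j + x := by
  unfold cum
  rw [Finset.sum_update_of_mem (Finset.mem_Iic.2 h)]
  rw [← Finset.add_sum_erase _ d (Finset.mem_Iic.2 h)]
  simp only [Finset.sdiff_singleton_eq_erase]
  ring

lemma cum_update_not_le (d : Fin n → ℝ) (i j : Fin n) (x : ℝ) (h : ¬ i ≤ j) :
    cum (Function.update d i (d i + x)) j = cum d j := by
  unfold cum
  apply Finset.sum_congr rfl
  intro k hk
  apply Function.update_of_ne
  intro hki; subst hki; exact h (Finset.mem_Iic.1 hk)

lemma exists_sd (ms : List (Move n)) :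
    ∃ s d : Fin n → ℝ, (∀ τ j, applySeq ms τ j = τ j + s j + cum d j) ∧
      cost2 s d ≤ seqCost ms := by
  induction ms with
  | nil =>
    refine ⟨0, 0, fun τ j => ?_, by simp [cost2, seqCost]⟩
    simp [applySeq, cum]
  | cons m ms ih =>
    obtain ⟨s, d, hsd, hc⟩ := ih
    cases m with
    | stampM x i =>
      refine ⟨Function.update s i (s i + x), d, fun τ j => ?_, ?_⟩
      · rw [applySeq_cons, hsd]
        show (stamp τ x i) j + s j + cum d j = _
        by_cases h : j = i
        · subst h; simp [stamp]; ring
        · simp [stamp, h, Function.update_of_ne h]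
      · rw [seqCost_cons]
        show Move.cost (Move.stampM x i) + seqCost ms ≥ _
        unfold cost2 at *
        rw [Finset.sum_add_distrib] at *
        rw [sum_abs_update]
        have : |s i + x| ≤ |s i| + |x| := abs_add_le _ _
        simp only [Move.cost]
        linarith
    | delayM x i =>
      refine ⟨s, Function.update d i (d i + x), fun τ j => ?_, ?_⟩
      · rw [applySeq_cons, hsd]
        show (delay τ x i) j + s j + cum d j = _
        by_cases h : i ≤ j
        · rw [cum_update_le d i j x h]; simp [delay, h]; ring
        · rw [cum_update_not_le d i j x h]; simp [delay, h]
      · rw [seqCost_cons]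
        show Move.cost (Move.delayM x i) + seqCost ms ≥ _
        unfold cost2 at *
        rw [Finset.sum_add_distrib] at *
        rw [sum_abs_update]
        have : |d i + x| ≤ |d i| + |x| := abs_add_le _ _
        simp only [Move.cost]
        linarith


-- ==== construction of move sequences ====

lemma move_pair_apply (s0 d0 : ℝ) (i : Fin n) (τ : Fin n → ℝ) (j : Fin n) :
    (Move.stampM s0 i).apply ((Move.delayM d0 i).apply τ) j
      = τ j + ((if i ≤ j then d0 else 0) + (if j = i then s0 else 0)) := by
  show stamp (delay τ d0 i) s0 i j = _
  unfold stamp delay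
  by_cases h1 : j = i <;> by_cases h2 : i ≤ j <;> simp [h1, h2] <;> first | ring | (exfalso; exact h2 (le_of_eq (by rw [h1])))

def seqOf (s d : Fin n → ℝ) (L : List (Fin n)) : List (Move n) :=
  L.flatMap (fun i => [Move.delayM (d i) i, Move.stampM (s i) i])

lemma seqOf_spec (s d : Fin n → ℝ) (L : List (Fin n)) :
    (∀ τ (j : Fin n), applySeq (seqOf s d L) τ j
      = τ j + (L.map (fun i => (if i ≤ j then d i else 0) + (if j = i then s i else 0))).sum)
    ∧ seqCost (seqOf s d L) = (L.map (fun i => |s i| + |d i|)).sum := by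
  induction L with
  | nil => exact ⟨fun τ j => by simp [seqOf, applySeq], by simp [seqOf, seqCost]⟩
  | cons i L ih =>
    constructor
    · intro τ j
      have : seqOf s d (i :: L)
          = Move.delayM (d i) i :: Move.stampM (s i) i :: seqOf s d L := by
        simp [seqOf]
      rw [this, applySeq_cons, applySeq_cons, ih.1, move_pair_apply]
      simp
      ring
    · have : seqOf s d (i :: L)
          = Move.delayM (d i) i :: Move.stampM (s i) i :: seqOf s d L := by
        simp [seqOf]
      rw [this, seqCost_cons, seqCost_cons, ih.2]
      simp [Move.cost]
      ring

lemma seqOf_apply (s d : Fin n → ℝ) (τ : Fin n → ℝ) (j : Fin n) :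
    applySeq (seqOf s d (List.finRange n)) τ j = τ j + s j + cum d j := by
  rw [(seqOf_spec s d (List.finRange n)).1]
  have h1 : (List.map (fun i => (if i ≤ j then d i else 0) + (if j = i then s i else 0))
      (List.finRange n)).sum
      = ∑ i : Fin n, ((if i ≤ j then d i else 0) + (if j = i then s i else 0)) := by
    rw [Fin.sum_univ_def]
  rw [h1, Finset.sum_add_distrib]
  have h2 : ∑ i : Fin n, (if i ≤ j then d i else 0) = cum d j := by
    unfold cum
    rw [← Finset.sum_filter]
    apply Finset.sum_congr _ (fun _ _ => rfl)
    ext k; simp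
  have h3 : ∑ i : Fin n, (if j = i then s i else 0) = s j := by
    rw [Finset.sum_ite_eq]; simp
  rw [h2, h3]; ring

lemma seqOf_cost (s d : Fin n → ℝ) :
    seqCost (seqOf s d (List.finRange n)) = cost2 s d := by
  rw [(seqOf_spec s d (List.finRange n)).2]
  unfold cost2
  rw [Fin.sum_univ_def]

-- ==== flow/cum lemmas ====

lemma Iic_zero (j : Fin n) (h : (j : ℕ) = 0) : Finset.Iic j = {j} := by
  ext i
  simp only [Finset.mem_Iic, Finset.mem_singleton]
  constructor
  · intro hi
    apply Fin.ext
    have := (Fin.le_def.1 hi)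
    omega
  · intro hi; subst hi; exact le_rfl

lemma Iic_succ (j : Fin n) (h : (j : ℕ) ≠ 0) :
    Finset.Iic j = insert j (Finset.Iic ⟨(j : ℕ) - 1, lt_of_le_of_lt (Nat.sub_le _ _) j.isLt⟩) := by
  ext i
  simp only [Finset.mem_Iic, Finset.mem_insert, Fin.le_def, Fin.ext_iff]
  omega

lemma cum_step (d : Fin n → ℝ) (j : Fin n) :
    cum d j = (if (j : ℕ) = 0 then 0
      else cum d ⟨(j : ℕ) - 1, lt_of_le_of_lt (Nat.sub_le _ _) j.isLt⟩) + d j := by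
  by_cases h : (j : ℕ) = 0
  · rw [if_pos h]
    unfold cum
    rw [Iic_zero j h]
    simp
  · rw [if_neg h]
    unfold cum
    rw [Iic_succ j h, Finset.sum_insert]
    · ring
    · simp only [Finset.mem_Iic, Fin.le_def]
      omega

lemma flow_shift (α s d : Fin n → ℝ) (j : Fin n) :
    flow (fun k => α k + (s k + cum d k)) j
      = flow α j + (d j + s j - sprev s j) := by
  unfold flow prev sprev
  by_cases h : (j : ℕ) = 0
  · rw [if_pos h, if_pos h, if_pos h]
    have hc := cum_step d j
    rw [if_pos h] at hc
    simp only []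
    rw [hc]
    ring
  · rw [if_neg h, if_neg h, if_neg h]
    have hc := cum_step d j
    rw [if_neg h] at hc
    simp only []
    rw [hc]
    ring

lemma flow_zero_fun (j : Fin n) : flow (fun _ => (0:ℝ)) j = 0 := by
  unfold flow prev
  by_cases h : (j : ℕ) = 0 <;> simp [h]

lemma flow_cum (h : Fin n → ℝ) (j : Fin n) : flow (cum h) j = h j := by
  have e : cum h = fun k => (fun _ => (0:ℝ)) k + ((fun _ => (0:ℝ)) k + cum h k) := by
    funext k; simp
  rw [e, flow_shift]
  rw [flow_zero_fun]
  unfold sprev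
  by_cases h0 : (j : ℕ) = 0 <;> simp [h0]

lemma cum_flow (τ : Fin n → ℝ) (j : Fin n) : cum (flow τ) j = τ j := by
  suffices H : ∀ k (hk : k < n), cum (flow τ) ⟨k, hk⟩ = τ ⟨k, hk⟩ by
    have := H j.val j.isLt
    simpa using this
  intro k
  induction k with
  | zero =>
    intro hk
    rw [cum_step]
    simp [flow, prev]
  | succ m ih =>
    intro hk
    rw [cum_step]
    have hne : ((⟨m+1, hk⟩ : Fin n) : ℕ) ≠ 0 := by simp
    rw [if_neg hne]
    have hprd : (⟨((⟨m+1, hk⟩ : Fin n) : ℕ) - 1,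
        lt_of_le_of_lt (Nat.sub_le _ _) (⟨m+1, hk⟩ : Fin n).isLt⟩ : Fin n)
        = ⟨m, Nat.lt_of_succ_lt hk⟩ := by
      apply Fin.ext; simp
    rw [hprd, ih (Nat.lt_of_succ_lt hk)]
    unfold flow prev
    rw [if_neg hne]
    have : (⟨(m+1) - 1, lt_of_le_of_lt (Nat.sub_le _ _) hk⟩ : Fin n) = ⟨m, Nat.lt_of_succ_lt hk⟩ := rfl
    simp only [this]
    ring

lemma eq_of_flow_eq (τ₁ τ₂ : Fin n → ℝ) (h : ∀ j, flow τ₁ j = flow τ₂ j) : τ₁ = τ₂ := by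
  funext j
  rw [← cum_flow τ₁ j, ← cum_flow τ₂ j]
  unfold cum
  exact Finset.sum_congr rfl (fun k _ => h k)


-- ==== nat-world core ====

def vN (s d : ℕ → ℝ) (j : ℕ) : ℝ := d j + s j - (if j = 0 then 0 else s (j-1))

def costN (N : ℕ) (s d : ℕ → ℝ) : ℝ := ∑ k ∈ Finset.range N, (|s k| + |d k|)

lemma abs_sub_reduce (X t : ℝ) (h0 : 0 ≤ t) (h1 : t ≤ max X 0) : |X - t| = |X| - t := by
  rcases le_or_gt X 0 with h | h
  · have ht : t = 0 := le_antisymm (by simpa [max_eq_right h] using h1) (by linarith)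
    simp [ht]
  · have hX : max X 0 = X := max_eq_left h.le
    rw [hX] at h1
    rw [abs_of_pos h, abs_of_nonneg (by linarith)]

lemma surgeryPos (N i : ℕ) (hiN : i < N) (s d : ℕ → ℝ) (c : ℝ)
    (hc0 : 0 ≤ c) (hcv : c ≤ vN s d i) :
    ∃ s' d', (∀ j, j ≠ i → vN s' d' j = vN s d j) ∧ vN s' d' i = c ∧
      costN N s' d' ≤ costN N s d := by
  set C : ℝ := if i = 0 then 0 else -(s (i-1)) with hC
  have hv : vN s d i = d i + s i + C := by
    unfold vN
    by_cases h : i = 0 <;> simp [hC, h] <;> ring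
  set δ : ℝ := vN s d i - c with hδ
  have hδ0 : 0 ≤ δ := by rw [hδ]; linarith
  set δA : ℝ := min δ (max (d i) 0) with hδA
  set δB : ℝ := min (δ - δA) (max (s i) 0) with hδB
  set δC : ℝ := δ - δA - δB with hδC
  have hδA0 : 0 ≤ δA := le_min hδ0 (le_max_right _ _)
  have hδAle : δA ≤ max (d i) 0 := min_le_right _ _
  have hδAδ : δA ≤ δ := min_le_left _ _
  have hδB0 : 0 ≤ δB := le_min (by linarith) (le_max_right _ _)
  have hδBle : δB ≤ max (s i) 0 := min_le_right _ _
  have hδBδ : δB ≤ δ - δA := min_le_left _ _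
  have hδC0 : 0 ≤ δC := by rw [hδC]; linarith
  have hδCle : δC ≤ max C 0 := by
    rcases le_or_gt δ (max (d i) 0) with h1 | h1
    · have hAe : δA = δ := min_eq_left h1
      have h2 : δC ≤ 0 := by rw [hδC, hAe]; linarith
      exact le_trans h2 (le_max_right _ _)
    · have hAe : δA = max (d i) 0 := min_eq_right h1.le
      rcases le_or_gt (δ - δA) (max (s i) 0) with h2 | h2
      · have hBe : δB = δ - δA := min_eq_left h2
        have h3 : δC = 0 := by rw [hδC, hBe]; ring
        rw [h3]; exact le_max_right _ _
      · have hBe : δB = max (s i) 0 := min_eq_right h2.le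
        have hAle : d i ≤ max (d i) 0 := le_max_left _ _
        have hBle : s i ≤ max (s i) 0 := le_max_left _ _
        have hCle : C ≤ max C 0 := le_max_left _ _
        have hδle : δ ≤ d i + s i + C := by rw [hδ, hv]; linarith
        rw [hδC, hAe, hBe]
        linarith
  have hδCzero : i = 0 → δC = 0 := by
    intro h0
    have hm : max C 0 = 0 := by simp [hC, h0]
    exact le_antisymm (by rw [← hm]; exact hδCle) hδC0
  set s' : ℕ → ℝ := fun k => if k = i then s i - δB
    else if i ≠ 0 ∧ k = i - 1 then s k + δC else s k with hs'
  set d' : ℕ → ℝ := fun k => if k = i then d i - δA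
    else if k = i + 1 then d k - δB
    else if i ≠ 0 ∧ k = i - 1 then d k - δC else d k with hd'
  have es_i : s' i = s i - δB := by simp [hs']
  have ed_i : d' i = d i - δA := by simp [hd']
  have es_other : ∀ k, k ≠ i → ¬(i ≠ 0 ∧ k = i - 1) → s' k = s k := by
    intro k h1 h2; simp only [hs']; rw [if_neg h1, if_neg h2]
  have es_pred : i ≠ 0 → s' (i-1) = s (i-1) + δC := by
    intro h0
    have hne : i - 1 ≠ i := by omega
    simp [hs', hne, h0]
  have ed_succ : d' (i+1) = d (i+1) - δB := by
    have h1 : i + 1 ≠ i := by omega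
    simp [hd', h1]
  have ed_pred : i ≠ 0 → d' (i-1) = d (i-1) - δC := by
    intro h0
    have h1 : i - 1 ≠ i := by omega
    have h2 : i - 1 ≠ i + 1 := by omega
    simp [hd', h1, h2, h0]
  have ed_other : ∀ k, k ≠ i → k ≠ i + 1 → ¬(i ≠ 0 ∧ k = i - 1) → d' k = d k := by
    intro k h1 h2 h3; simp only [hd']; rw [if_neg h1, if_neg h2, if_neg h3]
  refine ⟨s', d', ?_, ?_, ?_⟩
  · -- other coordinates preserved
    intro j hj
    unfold vN
    by_cases hj0 : j = 0
    · subst hj0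
      rw [if_pos rfl, if_pos rfl]
      have hi0 : i ≠ 0 := fun h => hj h.symm
      by_cases hi1 : i = 1
      · subst hi1
        have e1 := ed_pred (by omega)
        have e2 := es_pred (by omega)
        norm_num at e1 e2
        rw [e1, e2]; ring
      · rw [es_other 0 (fun h => hj h) (by omega), ed_other 0 (fun h => hj h) (by omega) (by omega)]
    · rw [if_neg hj0, if_neg hj0]
      by_cases hj1 : j = i + 1
      · have e1 : d' j = d j - δB := by rw [hj1]; exact ed_succ
        have e2 : s' j = s j := es_other j hj (by omega)
        have e3 : s' (j-1) = s (j-1) - δB := by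
          have hji : j - 1 = i := by omega
          rw [hji, es_i, ← hji]
        rw [e1, e2, e3]; ring
      · by_cases hj2 : i ≠ 0 ∧ j = i - 1
        · have e1 : d' j = d j - δC := by rw [hj2.2]; exact (ed_pred hj2.1)
          have e2 : s' j = s j + δC := by rw [hj2.2]; exact (es_pred hj2.1)
          have e3 : s' (j-1) = s (j-1) := es_other (j-1) (by omega) (by omega)
          rw [e1, e2, e3]; ring
        · rw [es_other j hj hj2, ed_other j hj hj1 hj2,
            es_other (j-1) (by omega) (by omega)]
  · -- coordinate i becomes c
    unfold vN
    rw [es_i, ed_i]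
    by_cases h0 : i = 0
    · rw [if_pos h0]
      have hC0 : C = 0 := by simp [hC, h0]
      have h1 : δC = 0 := hδCzero h0
      have h2 : δ = vN s d i - c := hδ
      have h3 : vN s d i = d i + s i + C := hv
      have h4 : δC = δ - δA - δB := hδC
      linarith
    · rw [if_neg h0, es_pred h0]
      have hCC : C = -(s (i-1)) := by rw [hC, if_neg h0]
      have h2 : δ = vN s d i - c := hδ
      have h3 : vN s d i = d i + s i + C := hv
      have h4 : δC = δ - δA - δB := hδC
      rw [hCC] at h3
      linarith
  · -- cost
    have key : ∀ k, |s' k| + |d' k| ≤ (|s k| + |d k|) +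
        ((if k = i then -δB - δA else 0) + (if k = i+1 then δB else 0)) := by
      intro k
      by_cases h1 : k = i
      · subst h1
        rw [es_i, ed_i, if_pos rfl, if_neg (by omega)]
        rw [abs_sub_reduce (s k) δB hδB0 hδBle, abs_sub_reduce (d k) δA hδA0 hδAle]
        linarith
      · by_cases h2 : k = i + 1
        · subst h2
          rw [ed_succ, es_other (i+1) h1 (by omega), if_neg h1, if_pos rfl]
          have hb : |d (i+1) - δB| ≤ |d (i+1)| + δB := by
            calc |d (i+1) - δB| ≤ |d (i+1)| + |δB| := abs_sub _ _
            _ = |d (i+1)| + δB := by rw [abs_of_nonneg hδB0]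
          linarith
        · by_cases h3 : i ≠ 0 ∧ k = i - 1
          · obtain ⟨hi0, hk⟩ := h3
            subst hk
            rw [es_pred hi0, ed_pred hi0, if_neg h1, if_neg h2]
            have habs : |s (i-1) + δC| = |s (i-1)| - δC := by
              have hCC : C = -(s (i-1)) := by rw [hC, if_neg hi0]
              have e : s (i-1) + δC = -(C - δC) := by rw [hCC]; ring
              rw [e, abs_neg, abs_sub_reduce C δC hδC0 hδCle, hCC, abs_neg]
            have hd2 : |d (i-1) - δC| ≤ |d (i-1)| + δC := by
              calc |d (i-1) - δC| ≤ |d (i-1)| + |δC| := abs_sub _ _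
              _ = |d (i-1)| + δC := by rw [abs_of_nonneg hδC0]
            rw [habs]
            linarith
          · rw [es_other k h1 h3, ed_other k h1 h2 h3, if_neg h1, if_neg h2]
            linarith
    have hsum := Finset.sum_le_sum (fun k (_ : k ∈ Finset.range N) => key k)
    have e2 : (∑ k ∈ Finset.range N, if k = i then (-δB - δA : ℝ) else 0) = -δB - δA := by
      rw [Finset.sum_ite_eq' (Finset.range N) i (fun _ => (-δB - δA : ℝ))]
      rw [if_pos (Finset.mem_range.2 hiN)]
    have e3 : (∑ k ∈ Finset.range N, if k = i+1 then (δB : ℝ) else 0) ≤ δB := by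
      rw [Finset.sum_ite_eq' (Finset.range N) (i+1) (fun _ => (δB : ℝ))]
      split
      · exact le_refl _
      · exact hδB0
    have e1 : ∑ k ∈ Finset.range N, ((|s k| + |d k|) +
        ((if k = i then -δB - δA else 0) + (if k = i+1 then δB else 0)))
        = (∑ k ∈ Finset.range N, (|s k| + |d k|))
          + ((∑ k ∈ Finset.range N, if k = i then (-δB - δA : ℝ) else 0)
          + (∑ k ∈ Finset.range N, if k = i+1 then (δB : ℝ) else 0)) := by
      simp only [Finset.sum_add_distrib]
    unfold costN
    rw [e1, e2] at hsum
    linarith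

lemma vN_neg (s d : ℕ → ℝ) (j : ℕ) :
    vN (fun k => -(s k)) (fun k => -(d k)) j = -(vN s d j) := by
  unfold vN
  by_cases h : j = 0 <;> simp [h] <;> ring

lemma costN_neg (N : ℕ) (s d : ℕ → ℝ) :
    costN N (fun k => -(s k)) (fun k => -(d k)) = costN N s d := by
  unfold costN
  apply Finset.sum_congr rfl
  intro k _
  rw [abs_neg, abs_neg]

lemma surgery (N i : ℕ) (hiN : i < N) (s d : ℕ → ℝ) (c : ℝ)
    (hbet : 0 ≤ c * (vN s d i - c)) :
    ∃ s' d', (∀ j, j ≠ i → vN s' d' j = vN s d j) ∧ vN s' d' i = c ∧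
      costN N s' d' ≤ costN N s d := by
  have hcase : (0 ≤ c ∧ c ≤ vN s d i) ∨ (c ≤ 0 ∧ vN s d i ≤ c) := by
    rcases lt_trichotomy c 0 with h | h | h
    · right
      refine ⟨h.le, ?_⟩
      nlinarith
    · subst h
      rcases le_total (vN s d i) 0 with h' | h'
      · right; exact ⟨le_refl _, h'⟩
      · left; exact ⟨le_refl _, h'⟩
    · left
      refine ⟨h.le, ?_⟩
      nlinarith
  rcases hcase with ⟨h1, h2⟩ | ⟨h1, h2⟩
  · exact surgeryPos N i hiN s d c h1 h2
  · obtain ⟨s', d', g1, g2, g3⟩ := surgeryPos N i hiN (fun k => -(s k)) (fun k => -(d k)) (-c)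
      (by linarith) (by rw [vN_neg]; linarith)
    refine ⟨fun k => -(s' k), fun k => -(d' k), ?_, ?_, ?_⟩
    · intro j hj
      rw [vN_neg, g1 j hj, vN_neg]
      ring
    · rw [vN_neg, g2]; ring
    · rw [costN_neg]
      calc costN N s' d' ≤ costN N (fun k => -(s k)) (fun k => -(d k)) := g3
      _ = costN N s d := costN_neg N s d

lemma transferN (N : ℕ) (s d c : ℕ → ℝ)
    (h : ∀ j, j < N → 0 ≤ c j * (vN s d j - c j)) :
    ∃ s' d', (∀ j, j < N → vN s' d' j = c j) ∧ costN N s' d' ≤ costN N s d := by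
  suffices H : ∀ k, k ≤ N → ∃ s' d',
      (∀ j, j < N → vN s' d' j = if j < k then c j else vN s d j) ∧
      costN N s' d' ≤ costN N s d by
    obtain ⟨s', d', h1, h2⟩ := H N le_rfl
    exact ⟨s', d', fun j hj => by rw [h1 j hj, if_pos hj], h2⟩
  intro k
  induction k with
  | zero => exact fun _ => ⟨s, d, fun j _ => by simp, le_rfl⟩
  | succ m ih =>
    intro hm
    obtain ⟨s1, d1, h1, h2⟩ := ih (by omega)
    have hmN : m < N := by omega
    have hvm : vN s1 d1 m = vN s d m := by
      have := h1 m hmN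
      rwa [if_neg (by omega)] at this
    obtain ⟨s2, d2, g1, g2, g3⟩ := surgery N m hmN s1 d1 (c m) (by rw [hvm]; exact h m hmN)
    refine ⟨s2, d2, ?_, le_trans g3 h2⟩
    intro j hj
    by_cases hjm : j = m
    · subst hjm
      rw [g2, if_pos (by omega)]
    · rw [g1 j hjm, h1 j hj]
      by_cases hlt : j < m
      · rw [if_pos hlt, if_pos (by omega)]
      · rw [if_neg hlt, if_neg (by omega)]


-- ==== bridges ====

def extF (f : Fin n → ℝ) : ℕ → ℝ := fun k => if h : k < n then f ⟨k, h⟩ else 0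

lemma extF_val (f : Fin n → ℝ) (j : Fin n) : extF f j.val = f j := by
  simp [extF, j.isLt]

lemma vN_ext (s d : Fin n → ℝ) (j : Fin n) :
    vN (extF s) (extF d) j.val = d j + s j - sprev s j := by
  unfold vN sprev
  by_cases h : (j : ℕ) = 0
  · rw [if_pos h, if_pos h, extF_val, extF_val]
  · rw [if_neg h, if_neg h, extF_val, extF_val]
    have hlt : (j : ℕ) - 1 < n := lt_of_le_of_lt (Nat.sub_le _ _) j.isLt
    have e : extF s ((j : ℕ) - 1) = s ⟨(j : ℕ) - 1, hlt⟩ := by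
      simp [extF, hlt]
    rw [e]

lemma costN_extF (s d : Fin n → ℝ) : costN n (extF s) (extF d) = cost2 s d := by
  unfold costN cost2
  rw [← Fin.sum_univ_eq_sum_range (fun k => |extF s k| + |extF d k|) n]
  apply Finset.sum_congr rfl
  intro j _
  rw [extF_val, extF_val]

lemma cost2_res (s d : ℕ → ℝ) :
    cost2 (fun i : Fin n => s i.val) (fun i : Fin n => d i.val) = costN n s d := by
  unfold costN cost2
  rw [← Fin.sum_univ_eq_sum_range (fun k => |s k| + |d k|) n]


/-- the timing function `γ` with `f_γ(i) = argmin_{x ∈ [a_i,b_i]} |x - f_σ(i)|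
= max(a_i, min(b_i, f_σ(i)))` belongs to the language and minimizes the mixed-moves
distance to `σ` over the language. -/
theorem statement14 (n : ℕ) (a b : Fin n → ℝ) (hab : ∀ i, a i ≤ b i) (σ : Fin n → ℝ) :
    inLanguage a b (fun i => ∑ j ∈ Finset.Iic i, max (a j) (min (b j) (flow σ j))) ∧
    ∀ α : Fin n → ℝ, inLanguage a b α →
      dN (fun i => ∑ j ∈ Finset.Iic i, max (a j) (min (b j) (flow σ j))) σ ≤ dN α σ := by
  set clampf : Fin n → ℝ := fun j => max (a j) (min (b j) (flow σ j)) with hclampf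
  have hγ : (fun i : Fin n => ∑ j ∈ Finset.Iic i, clampf j) = cum clampf := rfl
  rw [hγ]
  constructor
  · intro i
    rw [flow_cum]
    rw [Set.mem_Icc]
    constructor
    · exact le_max_left _ _
    · exact max_le (hab i) (min_le_left _ _)
  · intro α hα
    unfold dN
    have hne : {c : ℝ | ∃ ms, applySeq ms α = σ ∧ seqCost ms = c}.Nonempty := by
      refine ⟨_, ⟨seqOf (fun j => σ j - α j) 0 (List.finRange n), ?_, rfl⟩⟩
      funext j
      rw [seqOf_apply]
      simp [cum]
    apply le_csInf hne
    rintro C ⟨ms, hms, rfl⟩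
    obtain ⟨s, d, hsd, hcost⟩ := exists_sd ms
    have hflowσ : ∀ j : Fin n, flow σ j = flow α j + (d j + s j - sprev s j) := by
      intro j
      have hσ : σ = fun k => α k + (s k + cum d k) := by
        funext k
        rw [← hms, hsd]
        ring
      conv_lhs => rw [hσ]
      exact flow_shift α s d j
    set cdev : Fin n → ℝ := fun j => flow σ j - clampf j with hcdev
    have hbet : ∀ k, k < n → 0 ≤ (extF cdev) k *
        (vN (extF s) (extF d) k - (extF cdev) k) := by
      intro k hk
      have e1 : extF cdev k = cdev ⟨k, hk⟩ := by simp [extF, hk]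
      have e2 : vN (extF s) (extF d) k = d ⟨k, hk⟩ + s ⟨k, hk⟩ - sprev s ⟨k, hk⟩ :=
        vN_ext s d ⟨k, hk⟩
      rw [e1, e2]
      set j : Fin n := ⟨k, hk⟩
      have hg : d j + s j - sprev s j = flow σ j - flow α j := by
        rw [hflowσ j]; ring
      rw [hg]
      have hmem := hα j
      rw [Set.mem_Icc] at hmem
      rcases le_total (b j) (flow σ j) with h1 | h1
      · have hcl : clampf j = b j := by
          rw [hclampf]
          simp only []
          rw [min_eq_left h1, max_eq_right (hab j)]
        rw [hcdev]
        simp only []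
        rw [hcl]
        nlinarith [mul_nonneg (by linarith : (0:ℝ) ≤ flow σ j - b j)
          (by linarith [hmem.2] : (0:ℝ) ≤ b j - flow α j)]
      · rcases le_total (a j) (flow σ j) with h2 | h2
        · have hcl : clampf j = flow σ j := by
            rw [hclampf]
            simp only []
            rw [min_eq_right h1, max_eq_right h2]
          rw [hcdev]
          simp only []
          rw [hcl]
          simp
        · have hcl : clampf j = a j := by
            rw [hclampf]
            simp only []
            rw [min_eq_right h1, max_eq_left h2]
          rw [hcdev]
          simp only []
          rw [hcl]
          nlinarith [mul_nonneg (by linarith : (0:ℝ) ≤ a j - flow σ j)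
            (by linarith [hmem.1] : (0:ℝ) ≤ flow α j - a j)]
    obtain ⟨s', d', hv', hc'⟩ := transferN n (extF s) (extF d) (extF cdev) hbet
    set s2 : Fin n → ℝ := fun i => s' i.val with hs2
    set d2 : Fin n → ℝ := fun i => d' i.val with hd2
    have hkey : (fun j => cum clampf j + (s2 j + cum d2 j)) = σ := by
      apply eq_of_flow_eq
      intro j
      rw [flow_shift (cum clampf) s2 d2 j, flow_cum]
      have e2 : d2 j + s2 j - sprev s2 j = vN s' d' j.val := by
        unfold vN sprev
        by_cases h : (j : ℕ) = 0 <;> simp [hs2, hd2, h]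
      rw [e2, hv' j.val j.isLt, extF_val]
      rw [hcdev]
      simp only []
      ring
    have hbdd : BddBelow {c : ℝ | ∃ ms, applySeq ms (cum clampf) = σ ∧ seqCost ms = c} := by
      refine ⟨0, ?_⟩
      rintro x ⟨ms', _, rfl⟩
      exact seqCost_nonneg ms'
    have hmem2 : seqCost (seqOf s2 d2 (List.finRange n)) ∈
        {c : ℝ | ∃ ms, applySeq ms (cum clampf) = σ ∧ seqCost ms = c} := by
      refine ⟨seqOf s2 d2 (List.finRange n), ?_, rfl⟩
      funext j
      rw [seqOf_apply]
      have := congrFun hkey j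
      linarith
    calc sInf {c : ℝ | ∃ ms, applySeq ms (cum clampf) = σ ∧ seqCost ms = c}
        ≤ seqCost (seqOf s2 d2 (List.finRange n)) := csInf_le hbdd hmem2
    _ = cost2 s2 d2 := seqOf_cost s2 d2
    _ = costN n s' d' := cost2_res s' d'
    _ ≤ costN n (extF s) (extF d) := hc'
    _ = cost2 s d := costN_extF s d
    _ ≤ seqCost ms := hcost


end TimedAlign
end
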